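/- Let F(x,t) = Σ_{n≥0} Σ_{μ ∈ M_n} t^{plt_k(μ)} x^n be the generating function for Motzkin paths by length and number of k-plateaus, for a fixed k ≥ 0. Then F satisfies x²·F(x,t)² − (1 − x − x^{k+2}(t−1))·F(x,t) + 1 = 0. -/

import Mathlib

/-!
Every Motzkin path of positive length is uniquely `F μ` or `U μ D ν` with `μ`, `ν` Motzkin
paths (first return to height `0`). No `k`-plateau of `U μ D ν` straddles the returning `D`
(a nonempty suffix of `μ` has height gain `≤ 0`, a nonempty proper prefix of `U F^k D` gain `1`),
so its `k`-plateaus are those of `μ` and of `ν`, plus one exactly when `μ = F^k`. Hence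
`F = 1 + x F + x² (F + (t - 1) x^k) F`, which rearranges to the stated quadratic equation.
-/

inductive Step : Type
  | U | F | D
  deriving DecidableEq

instance : Fintype Step :=
  ⟨{Step.U, Step.F, Step.D}, by intro x; cases x <;> simp⟩

def stepVal : Step → ℤ
  | .U => 1
  | .F => 0
  | .D => -1

/-- Height of the path after the first `i` steps. -/
def ht (p : List Step) (i : ℕ) : ℤ := ((p.take i).map stepVal).sum

/-- A Motzkin path: starts and ends at height 0 and stays nonnegative. -/
def IsMotzkin (p : List Step) : Prop :=
  ht p p.length = 0 ∧ ∀ i ≤ p.length, 0 ≤ ht p i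

instance : DecidablePred IsMotzkin := fun p => by
  unfold IsMotzkin; infer_instance

/-- Number of ascents: maximal runs of up steps (counted at their last up step). -/
def asc (p : List Step) : ℕ :=
  ((List.range p.length).filter
    (fun i => p[i]? == some Step.U && p[i+1]? != some Step.U)).length

/-- Number of occurrences of `w` as a consecutive subword of `p`. -/
def countSubword (w p : List Step) : ℕ :=
  ((List.range p.length).filter (fun i => w.isPrefixOf (p.drop i))).length

/-- Number of plateaus: occurrences of a subword U F^k D for some k ≥ 0. -/
def plt (p : List Step) : ℕ :=
  ((List.range p.length).filter (fun i =>
    (List.range p.length).any (fun k =>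
      (Step.U :: (List.replicate k Step.F ++ [Step.D])).isPrefixOf (p.drop i)))).length
open PowerSeries Polynomial

/-- A k-plateau is an occurrence of the consecutive subword U F^k D. -/
def pltk (k : ℕ) (p : List Step) : ℕ :=
  countSubword (Step.U :: (List.replicate k Step.F ++ [Step.D])) p

/-- The generating function for Motzkin paths by length and number of k-plateaus. -/
noncomputable def Fpltk (k : ℕ) : PowerSeries (Polynomial ℚ) :=
  PowerSeries.mk fun n =>
    ∑ f : Fin n → Step,
      if IsMotzkin (List.ofFn f) then (Polynomial.X : Polynomial ℚ) ^ pltk k (List.ofFn f) else 0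

def IsWalk : ℕ → List Step → ℕ → Prop
  | a, [], b => a = b
  | a, .U :: p, b => IsWalk (a + 1) p b
  | a, .F :: p, b => IsWalk a p b
  | 0, .D :: _, _ => False
  | a + 1, .D :: p, b => IsWalk a p b

theorem isWalk_append {a c : ℕ} {p q : List Step} :
    IsWalk a (p ++ q) c ↔ ∃ b, IsWalk a p b ∧ IsWalk b q c := by
  induction p generalizing a with
  | nil => simp [IsWalk]
  | cons s p ih => rcases s with _ | _ | _ <;> rcases a with _ | a <;> simp [IsWalk, ih]

theorem isWalk_replicate_F {a b j : ℕ} : IsWalk a (List.replicate j .F) b ↔ a = b := by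
  induction j with
  | zero => rfl
  | succ j ih => exact ih

theorem isWalk_iff_ht {a b : ℕ} {p : List Step} :
    IsWalk a p b ↔
      (a : ℤ) + ht p p.length = b ∧ ∀ i ≤ p.length, 0 ≤ (a : ℤ) + ht p i := by
  induction p generalizing a with
  | nil => simp [IsWalk, ht]
  | cons s p ih =>
    have ht_succ (i : ℕ) : ht (s :: p) (i + 1) = stepVal s + ht p i := by
      simp [ht, List.take_succ_cons]
    have hall : (∀ i ≤ p.length + 1, 0 ≤ (a : ℤ) + ht (s :: p) i) ↔
        ∀ i ≤ p.length, 0 ≤ (a : ℤ) + stepVal s + ht p i := by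
      refine ⟨fun h i hi => ?_, fun h i hi => ?_⟩
      · simpa only [ht_succ, add_assoc] using h (i + 1) (by omega)
      · cases i with
        | zero => simp [ht]
        | succ i => simpa only [ht_succ, add_assoc] using h i (by omega)
    rw [List.length_cons, ht_succ, hall, ← add_assoc]
    rcases s with _ | _ | _ <;> rcases a with _ | a
    case D.zero =>
      simp only [IsWalk, false_iff, not_and]
      intro _ h
      simpa [ht, stepVal] using h 0 (Nat.zero_le _)
    all_goals simp only [IsWalk, ih, stepVal]; push_cast; ring_nf

theorem isMotzkin_iff_isWalk {p : List Step} : IsMotzkin p ↔ IsWalk 0 p 0 := by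
  simp [IsMotzkin, isWalk_iff_ht]

namespace IsWalk

theorem unique {a b c : ℕ} {p : List Step} (hb : IsWalk a p b) (hc : IsWalk a p c) :
    b = c := by
  induction p generalizing a with
  | nil => exact hb.symm.trans hc
  | cons s p ih =>
    rcases s with _ | _ | _ <;> rcases a with _ | a <;> first | exact ih hb hc | exact hb.elim

theorem lift {a b : ℕ} {p : List Step} (h : IsWalk a p b) (n : ℕ) :
    IsWalk (a + n) p (b + n) := by
  induction p generalizing a with
  | nil => exact congrArg (· + n) h
  | cons s p ih =>
    cases s with
    | U => simpa only [IsWalk, Nat.add_right_comm a n 1] using ih h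
    | F => exact ih h
    | D =>
      cases a with
      | zero => exact h.elim
      | succ a => rw [Nat.add_right_comm]; exact ih h

theorem cons_U_append_D {μ ν : List Step} (hμ : IsWalk 0 μ 0) (hν : IsWalk 0 ν 0) :
    IsWalk 0 (.U :: (μ ++ .D :: ν)) 0 :=
  isWalk_append.2 ⟨1, hμ.lift 1, hν⟩

theorem exists_eq_append_D : ∀ {h : ℕ} {q : List Step}, IsWalk (h + 1) q 0 →
    ∃ μ ν, IsWalk 0 μ 0 ∧ IsWalk h ν 0 ∧ q = μ ++ .D :: ν
  | h, .U :: p, hq => by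
    obtain ⟨μ₁, ν₁, hμ₁, hν₁, rfl⟩ := exists_eq_append_D (h := h + 1) (q := p) hq
    obtain ⟨μ₂, ν₂, hμ₂, hν₂, rfl⟩ := exists_eq_append_D (q := ν₁) hν₁
    exact ⟨.U :: (μ₁ ++ .D :: μ₂), ν₂, cons_U_append_D hμ₁ hμ₂, hν₂, by simp⟩
  | h, .F :: p, hq => by
    obtain ⟨μ, ν, hμ, hν, rfl⟩ := exists_eq_append_D (h := h) (q := p) hq
    exact ⟨.F :: μ, ν, hμ, hν, rfl⟩
  | _, .D :: p, hq => ⟨[], p, rfl, hq, rfl⟩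
termination_by _ q => q.length
decreasing_by all_goals simp_all <;> omega

theorem eq_nil_or_eq_cons {l : List Step} (hl : IsWalk 0 l 0) :
    l = [] ∨ (∃ t, IsWalk 0 t 0 ∧ l = .F :: t) ∨
      ∃ μ ν, IsWalk 0 μ 0 ∧ IsWalk 0 ν 0 ∧ l = .U :: (μ ++ .D :: ν) := by
  rcases l with _ | ⟨_ | _ | _, t⟩
  · exact .inl rfl
  · obtain ⟨μ, ν, hμ, hν, rfl⟩ := exists_eq_append_D (h := 0) hl
    exact .inr (.inr ⟨μ, ν, hμ, hν, rfl⟩)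
  · exact .inr (.inl ⟨t, hl, rfl⟩)
  · exact hl.elim

theorem not_append_D_prefix {μ μ' : List Step} (hμ : IsWalk 0 μ 0) (hμ' : IsWalk 0 μ' 0) :
    ¬ μ ++ [.D] <+: μ' := by
  rintro ⟨t, rfl⟩
  rw [List.append_assoc, List.singleton_append] at hμ'
  obtain ⟨b, hb, hD⟩ := isWalk_append.1 hμ'
  obtain rfl := hμ.unique hb
  exact hD

/-- The `D` after `μ` is the first step of `l` going below height `0`, so it pins down `μ`. -/
theorem eq_of_append_D_prefix {μ μ' l : List Step} (hμ : IsWalk 0 μ 0) (hμ' : IsWalk 0 μ' 0)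
    (h : μ ++ [.D] <+: l) (h' : μ' ++ [.D] <+: l) : μ = μ' := by
  have key {μ μ'} (hμ : IsWalk 0 μ 0) (hμ' : IsWalk 0 μ' 0) (h : μ ++ [.D] <+: μ' ++ [.D]) :
      μ = μ' := by
    rcases List.prefix_concat_iff.1 h with h | h
    · exact List.append_inj_left' h rfl
    · exact absurd h (not_append_D_prefix hμ hμ')
  rcases List.prefix_or_prefix_of_prefix h h' with h | h
  · exact key hμ hμ' h
  · exact (key hμ' hμ h).symm

theorem append_D_inj {μ ν μ' ν' : List Step} (hμ : IsWalk 0 μ 0) (hμ' : IsWalk 0 μ' 0)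
    (h : μ ++ .D :: ν = μ' ++ .D :: ν') : μ = μ' ∧ ν = ν' := by
  obtain rfl := eq_of_append_D_prefix (l := μ ++ .D :: ν) hμ hμ' (by simp) (by rw [h]; simp)
  exact ⟨rfl, List.cons_injective (List.append_cancel_left h)⟩

end IsWalk

theorem countSubword_nil (w : List Step) : countSubword w [] = 0 := rfl

theorem countSubword_cons (w : List Step) (s : Step) (p : List Step) :
    countSubword w (s :: p) = (if w <+: s :: p then 1 else 0) + countSubword w p := by
  unfold countSubword
  rw [List.length_cons, List.range_succ_eq_map, List.filter_cons, List.filter_map]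
  have hdrop : (fun i => w.isPrefixOf ((s :: p).drop i)) ∘ Nat.succ =
      fun i => w.isPrefixOf (p.drop i) := rfl
  by_cases hw : w <+: s :: p <;> simp [hw, hdrop, List.isPrefixOf_iff_prefix, Nat.add_comm]

theorem countSubword_append {w a : List Step} (b : List Step)
    (h : ∀ x, x <:+ a → x ≠ [] → w <+: x ++ b → w <+: x) :
    countSubword w (a ++ b) = countSubword w a + countSubword w b := by
  induction a with
  | nil => simp [countSubword_nil]
  | cons s a ih =>
    have hiff : w <+: s :: (a ++ b) ↔ w <+: s :: a :=
      ⟨h _ (List.suffix_refl _) (List.cons_ne_nil _ _),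
        fun hw => hw.trans (List.prefix_append _ _)⟩
    rw [List.cons_append, countSubword_cons, countSubword_cons, if_congr hiff rfl rfl,
      ih fun x hx => h x (hx.trans (List.suffix_cons s a)), add_assoc]

def plateau (k : ℕ) : List Step := .U :: (List.replicate k .F ++ [.D])

theorem pltk_eq_countSubword (k : ℕ) (p : List Step) :
    pltk k p = countSubword (plateau k) p := rfl

theorem eq_plateau_or_of_prefix {k : ℕ} {x : List Step} (hx : x <+: plateau k) (hne : x ≠ []) :
    x = plateau k ∨ ∃ j, x = .U :: List.replicate j .F := by
  rw [plateau, ← List.cons_append] at hx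
  rcases List.prefix_concat_iff.1 hx with hx | hx
  · exact .inl hx
  · rcases List.prefix_cons_iff.1 hx with hx | ⟨t, rfl, ht⟩
    · exact absurd hx hne
    · exact .inr ⟨t.length, congrArg _ (List.prefix_replicate_iff.1 ht).2⟩

theorem plateau_prefix_of_prefix_append {k : ℕ} {μ x : List Step} (b : List Step)
    (hμ : IsWalk 0 μ 0) (hx : x <:+ μ) (hne : x ≠ []) (h : plateau k <+: x ++ b) :
    plateau k <+: x := by
  rcases List.prefix_or_prefix_of_prefix h (List.prefix_append x b) with h | h
  · exact h
  rcases eq_plateau_or_of_prefix h hne with rfl | ⟨j, rfl⟩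
  · exact List.prefix_refl _
  obtain ⟨y, rfl⟩ := hx
  obtain ⟨c, -, hc⟩ := isWalk_append.1 hμ
  exact absurd (isWalk_replicate_F.1 hc) (Nat.succ_ne_zero c)

theorem plateau_prefix_cons_U_iff {k : ℕ} {μ : List Step} (ν : List Step)
    (hμ : IsWalk 0 μ 0) :
    plateau k <+: .U :: (μ ++ .D :: ν) ↔ μ = List.replicate k .F := by
  rw [plateau, List.cons_prefix_cons]
  refine ⟨fun ⟨_, h⟩ => IsWalk.eq_of_append_D_prefix hμ (isWalk_replicate_F.2 rfl)
    (by simp) h, fun h => ⟨rfl, by simp [h]⟩⟩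

theorem pltk_nil (k : ℕ) : pltk k [] = 0 := rfl

theorem pltk_cons_of_ne_U (k : ℕ) {s : Step} (hs : s ≠ .U) (p : List Step) :
    pltk k (s :: p) = pltk k p := by
  rw [pltk_eq_countSubword, countSubword_cons, if_neg (by simp [plateau, Ne.symm hs]), zero_add]
  rfl

theorem pltk_replicate_F (k j : ℕ) : pltk k (List.replicate j .F) = 0 := by
  induction j with
  | zero => rfl
  | succ j ih => rw [List.replicate_succ, pltk_cons_of_ne_U k (by decide), ih]

theorem pltk_cons_U_append_D (k : ℕ) {μ : List Step} (ν : List Step) (hμ : IsWalk 0 μ 0) :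
    pltk k (.U :: (μ ++ .D :: ν)) =
      (pltk k μ + if μ = List.replicate k .F then 1 else 0) + pltk k ν := by
  have hsplit := countSubword_append (.D :: ν) fun x hx hne h =>
    plateau_prefix_of_prefix_append (k := k) _ hμ hx hne h
  rw [pltk_eq_countSubword, countSubword_cons, if_congr (plateau_prefix_cons_U_iff ν hμ) rfl rfl,
    hsplit, ← pltk_eq_countSubword, ← pltk_eq_countSubword, pltk_cons_of_ne_U k (by decide)]
  ring

open Finset

def motzkinPaths (n : ℕ) : Finset (List Step) :=
  {l ∈ univ.image (List.ofFn : (Fin n → Step) → List Step) | IsMotzkin l}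

theorem mem_motzkinPaths {n : ℕ} {l : List Step} :
    l ∈ motzkinPaths n ↔ l.length = n ∧ IsWalk 0 l 0 := by
  rw [motzkinPaths, mem_filter, mem_image, isMotzkin_iff_isWalk]
  refine and_congr_left' ⟨fun ⟨f, _, hf⟩ => hf ▸ List.length_ofFn, fun hl => ?_⟩
  subst hl
  exact ⟨l.get, mem_univ _, List.ofFn_get l⟩

theorem motzkinPaths_zero : motzkinPaths 0 = {[]} := by
  ext l
  simp only [mem_motzkinPaths, List.length_eq_zero_iff, mem_singleton, and_iff_left_iff_imp]
  rintro rfl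
  rfl

theorem motzkinPaths_one : motzkinPaths 1 = {[.F]} := by
  ext l
  simp only [mem_motzkinPaths, List.length_eq_one_iff, mem_singleton]
  constructor
  · rintro ⟨⟨s, rfl⟩, h⟩
    cases s <;> first | rfl | simp [IsWalk] at h
  · rintro rfl
    exact ⟨⟨_, rfl⟩, rfl⟩

/-- First-return decomposition. -/
theorem sum_motzkinPaths_add_two {M : Type*} [AddCommMonoid M] (f : List Step → M) (n : ℕ) :
    ∑ l ∈ motzkinPaths (n + 2), f l =
      ∑ l ∈ motzkinPaths (n + 1), f (.F :: l) +
        ∑ ij ∈ antidiagonal n, ∑ μ ∈ motzkinPaths ij.1, ∑ ν ∈ motzkinPaths ij.2,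
          f (.U :: (μ ++ .D :: ν)) := by
  let compose : List Step ⊕ (_ : ℕ × ℕ) × (List Step × List Step) → List Step :=
    Sum.elim (.F :: ·) fun x => .U :: (x.2.1 ++ .D :: x.2.2)
  have hbij := sum_bij (s := (motzkinPaths (n + 1)).disjSum
      ((antidiagonal n).sigma fun ij => motzkinPaths ij.1 ×ˢ motzkinPaths ij.2))
    (t := motzkinPaths (n + 2)) (f := f ∘ compose) (g := f) (fun x _ => compose x) ?_ ?_ ?_
    (fun _ _ => rfl)
  · rw [← hbij, sum_disjSum, sum_sigma]
    simp_rw [sum_product]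
    rfl
  · rintro (l | ⟨⟨i, j⟩, μ, ν⟩) hx
    · simp only [inl_mem_disjSum, mem_motzkinPaths] at hx ⊢
      exact ⟨by simp [compose, hx.1], hx.2⟩
    · simp only [inr_mem_disjSum, mem_sigma, mem_product, HasAntidiagonal.mem_antidiagonal,
        mem_motzkinPaths] at hx ⊢
      obtain ⟨hij, ⟨rfl, hμ⟩, ⟨rfl, hν⟩⟩ := hx
      exact ⟨by simp [compose, ← hij]; omega, IsWalk.cons_U_append_D hμ hν⟩
  · rintro (l | ⟨⟨i, j⟩, μ, ν⟩) hx (l' | ⟨⟨i', j'⟩, μ', ν'⟩) hx' h <;>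
      simp only [compose, Sum.elim_inl, Sum.elim_inr, List.cons.injEq, reduceCtorEq,
        false_and] at h
    · rw [h.2]
    · simp only [inr_mem_disjSum, mem_sigma, mem_product, mem_motzkinPaths] at hx hx'
      obtain ⟨-, ⟨rfl, hμ⟩, ⟨rfl, -⟩⟩ := hx
      obtain ⟨-, ⟨rfl, hμ'⟩, ⟨rfl, -⟩⟩ := hx'
      obtain ⟨rfl, rfl⟩ := IsWalk.append_D_inj hμ hμ' h.2
      rfl
  · intro l hl
    obtain ⟨hlen, hw⟩ := mem_motzkinPaths.1 hl
    rcases hw.eq_nil_or_eq_cons with rfl | ⟨t, ht, rfl⟩ | ⟨μ, ν, hμ, hν, rfl⟩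
    · exact absurd hlen (by simp)
    · exact ⟨.inl t, inl_mem_disjSum.2 (mem_motzkinPaths.2 ⟨by simpa using hlen, ht⟩), rfl⟩
    · refine ⟨.inr ⟨(μ.length, ν.length), μ, ν⟩, ?_, rfl⟩
      simp only [inr_mem_disjSum, mem_sigma, mem_product, HasAntidiagonal.mem_antidiagonal]
      simp only [List.length_cons, List.length_append] at hlen
      exact ⟨by omega, mem_motzkinPaths.2 ⟨rfl, hμ⟩, mem_motzkinPaths.2 ⟨rfl, hν⟩⟩

theorem coeff_Fpltk (k n : ℕ) :
    PowerSeries.coeff n (Fpltk k) =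
      ∑ l ∈ motzkinPaths n, (Polynomial.X : ℚ[X]) ^ pltk k l := by
  rw [Fpltk, PowerSeries.coeff_mk, motzkinPaths, sum_filter,
    sum_image fun f _ g _ h => List.ofFn_injective h]

theorem coeff_Fpltk_add_C_mul_X_pow (k i : ℕ) :
    PowerSeries.coeff i (Fpltk k + PowerSeries.C (Polynomial.X - 1) * PowerSeries.X ^ k) =
      ∑ μ ∈ motzkinPaths i,
        (Polynomial.X : ℚ[X]) ^ (pltk k μ + if μ = List.replicate k .F then 1 else 0) := by
  have hterm (μ : List Step) :
      (Polynomial.X : ℚ[X]) ^ (pltk k μ + if μ = List.replicate k .F then 1 else 0) =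
        Polynomial.X ^ pltk k μ + if μ = List.replicate k .F then Polynomial.X - 1 else 0 := by
    split_ifs with h
    · simp [h, pltk_replicate_F]
    · simp
  have hmem : List.replicate k .F ∈ motzkinPaths i ↔ i = k := by
    simp [mem_motzkinPaths, isWalk_replicate_F, eq_comm]
  simp_rw [map_add, coeff_Fpltk, PowerSeries.coeff_C_mul_X_pow, hterm, sum_add_distrib,
    sum_ite_eq', hmem]

theorem coeff_Fpltk_add_two (k n : ℕ) :
    PowerSeries.coeff (n + 2) (Fpltk k) = PowerSeries.coeff (n + 1) (Fpltk k) +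
      PowerSeries.coeff n
        ((Fpltk k + PowerSeries.C (Polynomial.X - 1) * PowerSeries.X ^ k) * Fpltk k) := by
  rw [coeff_Fpltk, sum_motzkinPaths_add_two, PowerSeries.coeff_mul, coeff_Fpltk]
  congr 1
  · simp only [pltk_cons_of_ne_U k (by decide : Step.F ≠ .U)]
  · refine sum_congr rfl fun ij _ => ?_
    rw [coeff_Fpltk_add_C_mul_X_pow, coeff_Fpltk, sum_mul_sum]
    refine sum_congr rfl fun μ hμ => sum_congr rfl fun ν _ => ?_
    rw [pltk_cons_U_append_D k ν (mem_motzkinPaths.1 hμ).2, pow_add]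

theorem Fpltk_eq (k : ℕ) :
    Fpltk k = 1 + PowerSeries.X * Fpltk k + PowerSeries.X ^ 2 *
      ((Fpltk k + PowerSeries.C (Polynomial.X - 1) * PowerSeries.X ^ k) * Fpltk k) := by
  ext n : 1
  rcases n with _ | _ | n
  · simp [coeff_Fpltk, motzkinPaths_zero, pltk_nil]
  · simp [coeff_Fpltk, motzkinPaths_zero, motzkinPaths_one, pltk_nil, pltk_cons_of_ne_U,
      PowerSeries.coeff_X_pow_mul']
  · simp [coeff_Fpltk_add_two, pow_two, mul_assoc, PowerSeries.coeff_succ_X_mul]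

/-- F(x,t) satisfies x²F² − (1 − x − x^{k+2}(t−1))F + 1 = 0. -/
theorem kplateau_functional_equation (k : ℕ) :
    PowerSeries.X ^ 2 * Fpltk k ^ 2
      - (1 - PowerSeries.X - PowerSeries.X ^ (k + 2)
          * (PowerSeries.C (R := Polynomial ℚ) Polynomial.X - 1)) * Fpltk k
      + 1 = 0 := by
  have h := Fpltk_eq k
  rw [map_sub, map_one] at h
  linear_combination -h
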